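/- Let A be an open subset of (a,b). For every pair (u,γ) with u ∈ BV(a,b), γ = D^s u + g·L¹ for some g ∈ L^1(a,b), and u′ − g ∈ L^2(a,b), the localized Γ-lower limit satisfies E′(u,γ,A) ≥ 2 Σ_{x ∈ J_u ∩ A} f(|[u](x)|/2). -/

import Mathlib

open MeasureTheory Filter Set Topology
open scoped ENNReal NNReal

noncomputable section

/-- Integral of a real function against a finite signed (Radon) measure. -/
def sInt (μ : MeasureTheory.SignedMeasure ℝ) (φ : ℝ → ℝ) : ℝ :=
  (∫ x, φ x ∂μ.toJordanDecomposition.posPart) -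
    ∫ x, φ x ∂μ.toJordanDecomposition.negPart

/-- The cohesive energy density `f(t) = c₀ t` for `t < 1` and `f(t) = c₀` for `t ≥ 1`. -/
def fcut (c₀ t : ℝ) : ℝ := if t < 1 then c₀ * t else c₀

/-- The flat norm of a signed measure relative to the open set `A`:
the supremum of integrals against `W^{1,∞}_0(A)` test functions of norm at most one. -/
def flatNormOn (A : Set ℝ) (μ : SignedMeasure ℝ) : ℝ :=
  sSup { r | ∃ φ : ℝ → ℝ, LipschitzWith 1 φ ∧ (∀ x, |φ x| ≤ 1) ∧
    (∀ x ∉ A, φ x = 0) ∧ r = sInt μ φ }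

/-- The flat norm on the interval `(a,b)`. -/
def flatNorm (a b : ℝ) (μ : SignedMeasure ℝ) : ℝ := flatNormOn (Set.Ioo a b) μ

/-- The `W^{-1,q}` norm on the open set `A`, where `p = q'` is the conjugate exponent:
the supremum of integrals against (smooth) `W^{1,p}_0(A)` test functions of norm ≤ 1. -/
def negSobNormOn (A : Set ℝ) (p : ℝ≥0∞) (μ : SignedMeasure ℝ) : ℝ :=
  sSup { r | ∃ φ : ℝ → ℝ, ContDiff ℝ 1 φ ∧ (∀ x ∉ A, φ x = 0) ∧
    eLpNorm φ p (volume.restrict A) + eLpNorm (deriv φ) p (volume.restrict A) ≤ 1 ∧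
    r = sInt μ φ }

/-- `u ∈ W^{1,1}(a,b)` with (weak) derivative `u'`: `u` is absolutely continuous on
`(a,b)` with integrable derivative `u'`. -/
def IsW11 (a b : ℝ) (u u' : ℝ → ℝ) : Prop :=
  IntegrableOn u (Set.Ioo a b) ∧ IntegrableOn u' (Set.Ioo a b) ∧
    ∀ x ∈ Set.Ioo a b, ∀ y ∈ Set.Ioo a b, x ≤ y → u y - u x = ∫ t in x..y, u' t

/-- `‖u‖_{L^∞(a,b)} ≤ K`. -/
def LinftyLE (a b K : ℝ) (u : ℝ → ℝ) : Prop :=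
  ∀ᵐ x ∂(volume.restrict (Set.Ioo a b)), |u x| ≤ K

/-- `Du` is the distributional derivative (a finite signed measure concentrated on `A`)
of `u` on the open set `A`; this encodes `u ∈ BV(A)` with derivative measure `Du`. -/
def HasDerivMeasureOn (A : Set ℝ) (u : ℝ → ℝ) (Du : SignedMeasure ℝ) : Prop :=
  Du = Du.restrict A ∧
    ∀ φ : ℝ → ℝ, ContDiff ℝ 1 φ → HasCompactSupport φ → tsupport φ ⊆ A →
      ∫ x in A, u x * deriv φ x = - sInt Du φ

/-- Right limit `u(x+)`. -/
def rlim (u : ℝ → ℝ) (x : ℝ) : ℝ := limUnder (𝓝[>] x) u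
/-- Left limit `u(x−)`. -/
def llim (u : ℝ → ℝ) (x : ℝ) : ℝ := limUnder (𝓝[<] x) u

/-- The jump set `J_u` of `u` in `(a,b)`. -/
def jumpSet (a b : ℝ) (u : ℝ → ℝ) : Set ℝ :=
  {x | x ∈ Set.Ioo a b ∧ (∃ l, Tendsto u (𝓝[<] x) (𝓝 l)) ∧
    (∃ r, Tendsto u (𝓝[>] x) (𝓝 r)) ∧ rlim u x ≠ llim u x}

/-- The jump `[u](x) = u(x+) − u(x−)`. -/
def jump (u : ℝ → ℝ) (x : ℝ) : ℝ := rlim u x - llim u x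

/-- The Cantor part `D^c u` of the derivative measure `Du`. -/
def cantorPart (a b : ℝ) (u : ℝ → ℝ) (Du : SignedMeasure ℝ) : SignedMeasure ℝ :=
  (Du.singularPart volume).restrict (jumpSet a b u)ᶜ

/-- The average `⨍_{I_ε(x) ∩ (a,b)} |g| dt`. -/
def avgAbs (a b ε : ℝ) (g : ℝ → ℝ) (x : ℝ) : ℝ :=
  ⨍ t in Set.Ioo (x - ε) (x + ε) ∩ Set.Ioo a b, |g t|

/-- The value of the approximating energies, localized to the set `A`. -/
def EpsCoreOn (a b c₀ ε : ℝ) (A : Set ℝ) (u' g : ℝ → ℝ) : ℝ :=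
  (∫ x in A, (u' x - g x) ^ 2) + (1 / ε) * ∫ x in A, fcut c₀ (ε * avgAbs a b ε g x)

/-- The approximating (localized) energy `E_ε(u,γ,A)` for `K < ∞`: it is `∞` unless
`u ∈ W^{1,1}(a,b)`, `‖u‖_∞ ≤ K`, `γ = g·L¹` with `g ∈ L¹(a,b)` and `u' - g ∈ L²(a,b)`.
(The infimum runs over all the possible representations; they all yield the same value.) -/
def EepsLoc (a b c₀ K ε : ℝ) (A : Set ℝ) (u : ℝ → ℝ) (γ : SignedMeasure ℝ) : ℝ≥0∞ :=
  ⨅ (u' : ℝ → ℝ) (g : ℝ → ℝ) (_ : IsW11 a b u u') (_ : LinftyLE a b K u)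
    (_ : IntegrableOn g (Set.Ioo a b))
    (_ : γ = (volume.restrict (Set.Ioo a b)).withDensityᵥ g)
    (_ : MemLp (fun x => u' x - g x) 2 (volume.restrict (Set.Ioo a b))),
    ENNReal.ofReal (EpsCoreOn a b c₀ ε A u' g)

/-- The approximating energy `E_ε(u,γ)` for `K < ∞`. -/
def Eeps (a b c₀ K ε : ℝ) (u : ℝ → ℝ) (γ : SignedMeasure ℝ) : ℝ≥0∞ :=
  EepsLoc a b c₀ K ε (Set.Ioo a b) u γ

/-- The value of the limiting energy `E` for `u ∈ BV(a,b)` with derivative measure `Du`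
and inelastic density `g`:
`∫ |u'-g|² + c₀ ∫ |g| + 2 Σ_{x ∈ J_u} f(|[u](x)|/2) + c₀ |D^c u|(a,b)`. -/
def ElimVal (a b c₀ : ℝ) (u : ℝ → ℝ) (Du : SignedMeasure ℝ) (g : ℝ → ℝ) : ℝ≥0∞ :=
  ENNReal.ofReal (∫ x in Set.Ioo a b, (Du.rnDeriv volume x - g x) ^ 2)
    + ENNReal.ofReal (c₀ * ∫ x in Set.Ioo a b, |g x|)
    + 2 * ∑' p : (jumpSet a b u), ENNReal.ofReal (fcut c₀ (|jump u ↑p| / 2))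
    + ENNReal.ofReal c₀ *
        MeasureTheory.SignedMeasure.totalVariation (cantorPart a b u Du) (Set.Ioo a b)

/-- The limiting energy `E(u,γ)` for `K < ∞`: it is `∞` unless `u ∈ BV(a,b)`,
`‖u‖_∞ ≤ K`, `γ = D^s u + g·L¹` with `g ∈ L¹(a,b)` and `u' - g ∈ L²(a,b)`. -/
def Elim (a b c₀ K : ℝ) (u : ℝ → ℝ) (γ : SignedMeasure ℝ) : ℝ≥0∞ :=
  ⨅ (Du : SignedMeasure ℝ) (g : ℝ → ℝ)
    (_ : IntegrableOn u (Set.Ioo a b)) (_ : HasDerivMeasureOn (Set.Ioo a b) u Du)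
    (_ : LinftyLE a b K u) (_ : IntegrableOn g (Set.Ioo a b))
    (_ : γ = Du.singularPart volume + (volume.restrict (Set.Ioo a b)).withDensityᵥ g)
    (_ : MemLp (fun x => Du.rnDeriv volume x - g x) 2 (volume.restrict (Set.Ioo a b))),
    ElimVal a b c₀ u Du g

/-- Convergence `u_ε → u` in `L¹(a,b)` as `ε → 0⁺`. -/
def TendstoL1 (a b : ℝ) (uε : ℝ → ℝ → ℝ) (u : ℝ → ℝ) : Prop :=
  Tendsto (fun ε => ∫ x in Set.Ioo a b, |uε ε x - u x|) (𝓝[>] (0:ℝ)) (𝓝 0)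

/-- Convergence `γ_ε → γ` in the flat norm as `ε → 0⁺`. -/
def TendstoFlat (a b : ℝ) (γε : ℝ → SignedMeasure ℝ) (γ : SignedMeasure ℝ) : Prop :=
  Tendsto (fun ε => flatNorm a b (γε ε - γ)) (𝓝[>] (0:ℝ)) (𝓝 0)

/-- The localized Γ-lower limit `E'(u,γ,A)`. -/
def GammaLowerLoc (a b c₀ K : ℝ) (A : Set ℝ) (u : ℝ → ℝ) (γ : SignedMeasure ℝ) : ℝ≥0∞ :=
  ⨅ (uε : ℝ → ℝ → ℝ) (γε : ℝ → SignedMeasure ℝ)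
    (_ : TendstoL1 a b uε u) (_ : TendstoFlat a b γε γ),
    liminf (fun ε => EepsLoc a b c₀ K ε A (uε ε) (γε ε)) (𝓝[>] (0:ℝ))

/-- The Γ-upper limit `E''(u,γ)`. -/
def GammaUpper (a b c₀ K : ℝ) (u : ℝ → ℝ) (γ : SignedMeasure ℝ) : ℝ≥0∞ :=
  ⨅ (uε : ℝ → ℝ → ℝ) (γε : ℝ → SignedMeasure ℝ)
    (_ : TendstoL1 a b uε u) (_ : TendstoFlat a b γε γ),
    limsup (fun ε => Eeps a b c₀ K ε (uε ε) (γε ε)) (𝓝[>] (0:ℝ))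

/-! ### The unrestricted case `K = ∞` (extended-real valued displacements) -/

/-- The finiteness set `F(u)` of `u : (a,b) → ℝ̄`. -/
def finSet (a b : ℝ) (u : ℝ → EReal) : Set ℝ :=
  interior {x | x ∈ Set.Ioo a b ∧ u x ≠ ⊤ ∧ u x ≠ ⊥}

/-- Right limit `u(x+)` in `ℝ̄`. -/
def erlim (u : ℝ → EReal) (x : ℝ) : EReal := limUnder (𝓝[>] x) u
/-- Left limit `u(x−)` in `ℝ̄`. -/
def ellim (u : ℝ → EReal) (x : ℝ) : EReal := limUnder (𝓝[<] x) u

/-- The jump set of `u : (a,b) → ℝ̄`. -/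
def jumpSetE (a b : ℝ) (u : ℝ → EReal) : Set ℝ :=
  {x | x ∈ Set.Ioo a b ∧ (∃ l, Tendsto u (𝓝[<] x) (𝓝 l)) ∧
    (∃ r, Tendsto u (𝓝[>] x) (𝓝 r)) ∧ erlim u x ≠ ellim u x}

/-- `f(|r − l|/2)` for one-sided limits `l, r ∈ ℝ̄`, with the convention `f(∞) = c₀`. -/
def fjumpE (c₀ : ℝ) (l r : EReal) : ℝ :=
  if l = ⊤ ∨ l = ⊥ ∨ r = ⊤ ∨ r = ⊥ then c₀ else fcut c₀ (|r.toReal - l.toReal| / 2)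

/-- `u ∈ BV_{∞,P}(a,b)` with representation data `u = w + Σᵢ αᵢ χ_{(x_{i-1}, x_i)}`. -/
def IsBVinftyRep (a b : ℝ) (u : ℝ → EReal) (m : ℕ) (x : Fin (m + 1) → ℝ)
    (α : Fin m → EReal) (w : ℝ → ℝ) : Prop :=
  StrictMono x ∧ x 0 = a ∧ x (Fin.last m) = b ∧
    (∀ i, α i = ⊥ ∨ α i = 0 ∨ α i = ⊤) ∧
    IntegrableOn w (Set.Ioo a b) ∧ (∃ Dw, HasDerivMeasureOn (Set.Ioo a b) w Dw) ∧
    ∀ t ∈ Set.Ioo a b,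
      u t = (w t : EReal) +
        ∑ i : Fin m, (if t ∈ Set.Ioo (x i.castSucc) (x i.succ) then α i else 0)

/-- The value of the extended limiting energy for `u ∈ BV_{∞,P}(a,b)` with `BV` part `w`
(whose derivative measure is `Dw`) and inelastic density `g`. -/
def ElimInfVal (a b c₀ : ℝ) (u : ℝ → EReal) (Dw : SignedMeasure ℝ) (g : ℝ → ℝ) : ℝ≥0∞ :=
  ENNReal.ofReal (∫ t in finSet a b u, (Dw.rnDeriv volume t - g t) ^ 2)
    + ENNReal.ofReal (c₀ * ∫ t in finSet a b u, |g t|)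
    + 2 * ∑' p : (jumpSetE a b u), ENNReal.ofReal (fjumpE c₀ (ellim u ↑p) (erlim u ↑p))
    + ENNReal.ofReal c₀ *
        MeasureTheory.SignedMeasure.totalVariation
          ((Dw.singularPart volume).restrict (jumpSetE a b u)ᶜ) (finSet a b u)

/-- The extended limiting energy `E(u,γ)` for `K = ∞`: it is `∞` unless
`u ∈ BV_{∞,P}(a,b)`, `g ∈ L¹(F(u))`, `γ⌊F(u) = (D^s u + g·L¹)⌊F(u)` and
`u' − g ∈ L²(F(u))`. -/
def ElimInf (a b c₀ : ℝ) (u : ℝ → EReal) (γ : SignedMeasure ℝ) : ℝ≥0∞ :=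
  ⨅ (m : ℕ) (x : Fin (m + 1) → ℝ) (α : Fin m → EReal) (w : ℝ → ℝ)
    (Dw : SignedMeasure ℝ) (g : ℝ → ℝ)
    (_ : IsBVinftyRep a b u m x α w)
    (_ : HasDerivMeasureOn (Set.Ioo a b) w Dw)
    (_ : IntegrableOn g (finSet a b u))
    (_ : γ.restrict (finSet a b u) =
      (Dw.singularPart volume + (volume.restrict (finSet a b u)).withDensityᵥ g).restrict
        (finSet a b u))
    (_ : MemLp (fun t => Dw.rnDeriv volume t - g t) 2 (volume.restrict (finSet a b u))),
    ElimInfVal a b c₀ u Dw g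

/-- The approximating energy `E_ε(u,γ)` for `K = ∞`, acting on `u : (a,b) → ℝ̄`. -/
def EepsInf (a b c₀ ε : ℝ) (u : ℝ → EReal) (γ : SignedMeasure ℝ) : ℝ≥0∞ :=
  ⨅ (v : ℝ → ℝ) (u' : ℝ → ℝ) (g : ℝ → ℝ) (_ : ∀ t ∈ Set.Ioo a b, u t = (v t : EReal))
    (_ : IsW11 a b v u') (_ : IntegrableOn g (Set.Ioo a b))
    (_ : γ = (volume.restrict (Set.Ioo a b)).withDensityᵥ g)
    (_ : MemLp (fun t => u' t - g t) 2 (volume.restrict (Set.Ioo a b))),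
    ENNReal.ofReal (EpsCoreOn a b c₀ ε (Set.Ioo a b) u' g)

/-- Convergence `(u_ε, γ_ε) → (u, γ)` in `L⁰((a,b), ℝ̄) × M(a,b)`:
`u_ε → u` a.e. and `γ_ε⌊A → γ⌊A` in the flat norm for every open `A ⋐ F(u) ∖ S`,
for some finite set `S ⊆ (a,b)` of partition points. -/
def TendstoL0 (a b : ℝ) (uε : ℝ → ℝ → EReal) (γε : ℝ → SignedMeasure ℝ)
    (u : ℝ → EReal) (γ : SignedMeasure ℝ) : Prop :=
  (∀ᵐ t ∂(volume.restrict (Set.Ioo a b)),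
      Tendsto (fun ε => uε ε t) (𝓝[>] (0:ℝ)) (𝓝 (u t))) ∧
    ∃ S : Finset ℝ, ↑S ⊆ Set.Ioo a b ∧
      ∀ A : Set ℝ, IsOpen A → IsCompact (closure A) → closure A ⊆ finSet a b u \ ↑S →
        Tendsto (fun ε => flatNormOn A (((γε ε) - γ).restrict A)) (𝓝[>] (0:ℝ)) (𝓝 0)

/-- The minimal approximating energy `Ẽ_ε(u)` (for `K < ∞`). -/
def EepsMin (a b c₀ K ε : ℝ) (u : ℝ → ℝ) : ℝ≥0∞ :=
  ⨅ γ : SignedMeasure ℝ, Eeps a b c₀ K ε u γ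

/-- The minimal limiting energy `Ẽ(u)` (for `K < ∞`). -/
def ElimMin (a b c₀ K : ℝ) (u : ℝ → ℝ) : ℝ≥0∞ :=
  ⨅ γ : SignedMeasure ℝ, Elim a b c₀ K u γ

/-- The minimal approximating energy `Ẽ_ε(u)` for `K = ∞`. -/
def EepsInfMin (a b c₀ ε : ℝ) (u : ℝ → EReal) : ℝ≥0∞ :=
  ⨅ γ : SignedMeasure ℝ, EepsInf a b c₀ ε u γ

/-- The minimal limiting energy `Ẽ(u)` for `K = ∞`. -/
def ElimInfMin (a b c₀ : ℝ) (u : ℝ → EReal) : ℝ≥0∞ :=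
  ⨅ γ : SignedMeasure ℝ, ElimInf a b c₀ u γ

/-- The soft-thresholding function `g*` associated with `h` and `c₀`. -/
def softThresh (c₀ : ℝ) (h : ℝ → ℝ) : ℝ → ℝ := fun x =>
  if c₀ / 2 < |h x| then h x - Real.sign (h x) * (c₀ / 2) else 0

open Classical in
/-- The functional `g ↦ ∫ |h−g|² + c₀ ∫ |g|` on `(a,b)`, with value `∞` if `h − g ∉ L²`. -/
def softJ (a b c₀ : ℝ) (h g : ℝ → ℝ) : ℝ≥0∞ :=
  if MemLp (fun x => h x - g x) 2 (volume.restrict (Set.Ioo a b)) then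
    ENNReal.ofReal (∫ x in Set.Ioo a b, (h x - g x) ^ 2)
      + ENNReal.ofReal (c₀ * ∫ x in Set.Ioo a b, |g x|)
  else ⊤

/-!
Fix `u_ε → u` in `L¹` and finitely many jump points `x ∈ J_u ∩ A`. Choose disjoint windows
`(x - r, x + r) ⊆ A` on which `u` is `δ`-close to its one-sided limits at `x`. For an `ε ≪ r`
whose energy is below the liminf, `u_ε` is `δ`-close to `u` at some `p < x < q` in the window,
and Cauchy–Schwarz makes the elastic part `u_ε' - g` of `L¹`-size at most `δ` on `(p, q)`; hence
`g` carries a mass `m ≥ |[u](x)| - 5δ` on `(p, q)`. The masses `M(y)` of `|g|` on `I_ε(y) ∩ (p, q)`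
satisfy `0 ≤ M(y) ≤ min(m, 2ε ⨍_{I_ε(y)} |g|)` and integrate to `2εm` over `y ∈ (p - ε, q + ε)`, so
concavity of `t ↦ f(t/2)` gives `(1/ε) ∫ f(ε ⨍_{I_ε(y)} |g|) dy ≥ 2 f(m/2)` on each window.
Summing over the windows and letting `δ → 0` gives the bound.
-/

theorem fcut_eq_mul_min (c₀ t : ℝ) : fcut c₀ t = c₀ * min t 1 := by
  unfold fcut
  split_ifs with h
  · rw [min_eq_left h.le]
  · rw [min_eq_right (not_lt.1 h), mul_one]

theorem continuous_fcut (c₀ : ℝ) : Continuous (fcut c₀) := by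
  simp_rw [funext (fcut_eq_mul_min c₀)]
  fun_prop

theorem fcut_nonneg {c₀ : ℝ} (hc : 0 ≤ c₀) {t : ℝ} (ht : 0 ≤ t) : 0 ≤ fcut c₀ t := by
  rw [fcut_eq_mul_min]; exact mul_nonneg hc (le_min ht zero_le_one)

theorem fcut_le {c₀ : ℝ} (hc : 0 ≤ c₀) (t : ℝ) : fcut c₀ t ≤ c₀ := by
  rw [fcut_eq_mul_min]; exact mul_le_of_le_one_right hc (min_le_right _ _)

theorem fcut_mono {c₀ : ℝ} (hc : 0 ≤ c₀) : Monotone (fcut c₀) := fun s t hst => by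
  simp only [fcut_eq_mul_min]; gcongr

theorem fcut_le_fcut_sub_add {c₀ : ℝ} (hc : 0 ≤ c₀) {d : ℝ} (hd : 0 ≤ d) (s : ℝ) :
    fcut c₀ s ≤ fcut c₀ (s - d) + c₀ * d := by
  simp only [fcut_eq_mul_min, ← mul_add]
  gcongr
  rcases le_total s 1 with h | h <;> rcases le_total (s - d) 1 with h' | h' <;>
    simp only [min_eq_left, min_eq_right, h, h'] <;> linarith

/-- `t ↦ f(t/2)` is concave on `[0, ∞)` and vanishes at `0`. -/
theorem mul_fcut_half_le {c₀ : ℝ} (hc : 0 ≤ c₀) {M m : ℝ} (hM : 0 ≤ M) (hMm : M ≤ m) :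
    M * fcut c₀ (m / 2) ≤ m * fcut c₀ (M / 2) := by
  simp only [fcut_eq_mul_min]
  rcases le_total (M / 2) 1 with h | h
  · rw [min_eq_left h]
    nlinarith [mul_le_mul_of_nonneg_left (min_le_left (m / 2) 1) (mul_nonneg hM hc)]
  · rw [min_eq_right h, min_eq_right (by linarith)]
    nlinarith

section Window

variable {G : ℝ → ℝ} {ε : ℝ}

theorem integral_Ioo_sub_add_eq_sub (hG : Integrable G) (hε : 0 ≤ ε) (c y : ℝ) :
    ∫ t in Ioo (y - ε) (y + ε), G t = (∫ t in c..y + ε, G t) - ∫ t in c..y - ε, G t := by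
  rw [intervalIntegral.integral_interval_sub_left hG.intervalIntegrable hG.intervalIntegrable,
    intervalIntegral.integral_of_le (by linarith), integral_Ioc_eq_integral_Ioo]

theorem continuous_integral_Ioo_sub_add (hG : Integrable G) (hε : 0 ≤ ε) :
    Continuous fun y => ∫ t in Ioo (y - ε) (y + ε), G t := by
  simp_rw [integral_Ioo_sub_add_eq_sub hG hε 0]
  have := intervalIntegral.continuous_primitive (fun _ _ => hG.intervalIntegrable) 0
  fun_prop

/-- Each point of `(p, q)` lies in `I_ε(y)` for a set of `y` of length `2ε`; instead of Fubini,
the proof shifts the primitive of `h`. -/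
theorem integral_integral_Ioo_sub_add {h : ℝ → ℝ} (hh : Integrable h) {p q : ℝ}
    (hsupp : ∀ t ∉ Ioo p q, h t = 0) (hpq : p ≤ q) (hε : 0 ≤ ε) :
    ∫ y in Ioo (p - ε) (q + ε), ∫ t in Ioo (y - ε) (y + ε), h t = 2 * ε * ∫ t, h t := by
  set P : ℝ → ℝ := fun y => ∫ t in p..y, h t
  have hP : Continuous P :=
    intervalIntegral.continuous_primitive (fun _ _ => hh.intervalIntegrable) p
  have hPi : ∀ c d, IntervalIntegrable P volume c d := fun c d => hP.intervalIntegrable c d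
  have hP_left : ∀ y ≤ p, P y = 0 := fun y hy => by
    refine intervalIntegral.integral_zero_ae (Eventually.of_forall fun t ht => hsupp t ?_)
    rw [uIoc_of_ge hy] at ht
    exact fun h' => (ht.2.trans_lt h'.1).false
  have hP_right : ∀ y ≥ q, P y = ∫ t, h t := fun y hy => by
    show ∫ t in p..y, h t = _
    rw [intervalIntegral.integral_of_le (hpq.trans hy)]
    exact setIntegral_eq_integral_of_forall_compl_eq_zero
      fun t ht => hsupp t fun h' => ht ⟨h'.1, h'.2.le.trans hy⟩
  have hshift : ∫ y in (p - ε)..(q + ε), (P (y + ε) - P (y - ε))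
      = (∫ y in q..(q + 2 * ε), P y) - ∫ y in (p - 2 * ε)..p, P y := by
    rw [intervalIntegral.integral_sub (f := fun y => P (y + ε)) (g := fun y => P (y - ε))
        ((hP.comp (continuous_add_const ε)).intervalIntegrable _ _)
        ((hP.comp (continuous_sub_right ε)).intervalIntegrable _ _),
      intervalIntegral.integral_comp_add_right P ε, intervalIntegral.integral_comp_sub_right P ε,
      show p - ε + ε = p by ring, show q + ε + ε = q + 2 * ε by ring,
      show p - ε - ε = p - 2 * ε by ring, show q + ε - ε = q by ring,
      ← intervalIntegral.integral_add_adjacent_intervals (hPi p q) (hPi q (q + 2 * ε)),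
      ← intervalIntegral.integral_add_adjacent_intervals (hPi (p - 2 * ε) p) (hPi p q)]
    ring
  have hright : ∫ y in q..(q + 2 * ε), P y = 2 * ε * ∫ t, h t := by
    rw [intervalIntegral.integral_congr fun y hy => hP_right y (by
      rw [uIcc_of_le (by linarith)] at hy; exact hy.1)]
    simp
  have hleft : ∫ y in (p - 2 * ε)..p, P y = 0 := by
    rw [intervalIntegral.integral_congr fun y hy => hP_left y (by
      rw [uIcc_of_le (by linarith)] at hy; exact hy.2)]
    simp
  rw [← integral_Ioc_eq_integral_Ioo, ← intervalIntegral.integral_of_le (by linarith)]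
  simp_rw [integral_Ioo_sub_add_eq_sub hh hε p]
  rw [hshift, hright, hleft, sub_zero]

end Window

theorem two_mul_fcut_le_integral_fcut_window {c₀ : ℝ} (hc : 0 ≤ c₀) {h : ℝ → ℝ}
    (hh : Integrable h) (hnn : ∀ t, 0 ≤ h t) {p q ε : ℝ} (hsupp : ∀ t ∉ Ioo p q, h t = 0)
    (hpq : p ≤ q) (hε : 0 < ε) :
    2 * ε * fcut c₀ ((∫ t, h t) / 2) ≤
      ∫ y in Ioo (p - ε) (q + ε), fcut c₀ ((∫ t in Ioo (y - ε) (y + ε), h t) / 2) := by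
  set m := ∫ t, h t
  set M : ℝ → ℝ := fun y => ∫ t in Ioo (y - ε) (y + ε), h t
  have hM : Continuous M := continuous_integral_Ioo_sub_add hh hε.le
  have hM_nonneg : ∀ y, 0 ≤ M y := fun y => setIntegral_nonneg measurableSet_Ioo fun t _ => hnn t
  have hRHS_nonneg : 0 ≤ ∫ y in Ioo (p - ε) (q + ε), fcut c₀ (M y / 2) :=
    setIntegral_nonneg measurableSet_Ioo fun y _ => fcut_nonneg hc (by linarith [hM_nonneg y])
  rcases (integral_nonneg hnn : 0 ≤ m).eq_or_lt with hm | hm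
  · rwa [show m = 0 from hm.symm, zero_div, fcut_eq_mul_min, min_eq_left zero_le_one, mul_zero,
      mul_zero]
  refine le_of_mul_le_mul_left ?_ hm
  have hM_le : ∀ y, M y ≤ m := fun y => setIntegral_le_integral hh (Eventually.of_forall hnn)
  calc m * (2 * ε * fcut c₀ (m / 2))
      = ∫ y in Ioo (p - ε) (q + ε), M y * fcut c₀ (m / 2) := by
        rw [integral_mul_const, integral_integral_Ioo_sub_add hh hsupp hpq hε.le]; ring
    _ ≤ ∫ y in Ioo (p - ε) (q + ε), m * fcut c₀ (M y / 2) :=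
        integral_mono
          ((hM.mul continuous_const).integrableOn_Icc.mono_set Ioo_subset_Icc_self)
          ((continuous_const.mul ((continuous_fcut c₀).comp (hM.div_const 2))
            ).integrableOn_Icc.mono_set Ioo_subset_Icc_self)
          fun y => mul_fcut_half_le hc (hM_nonneg y) (hM_le y)
    _ = m * ∫ y in Ioo (p - ε) (q + ε), fcut c₀ (M y / 2) := integral_const_mul _ _

section Average

variable {a b ε : ℝ} {g : ℝ → ℝ}

theorem avgAbs_nonneg (y : ℝ) : 0 ≤ avgAbs a b ε g y := by
  rw [avgAbs, setAverage_eq]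
  exact smul_nonneg (inv_nonneg.2 measureReal_nonneg)
    (setIntegral_nonneg (measurableSet_Ioo.inter measurableSet_Ioo) fun t _ => abs_nonneg _)

theorem avgAbs_eq_div (y : ℝ) :
    avgAbs a b ε g y = (∫ t in Ioo (y - ε) (y + ε), (Ioo a b).indicator (fun t => |g t|) t) /
      ∫ t in Ioo (y - ε) (y + ε), (Ioo a b).indicator 1 t := by
  rw [avgAbs, setAverage_eq, smul_eq_mul, setIntegral_indicator measurableSet_Ioo,
    integral_indicator_one measurableSet_Ioo, measureReal_restrict_apply measurableSet_Ioo,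
    inter_comm, div_eq_inv_mul]

theorem measurable_avgAbs (hε : 0 ≤ ε) (hg : IntegrableOn g (Ioo a b)) :
    Measurable (avgAbs a b ε g) := by
  simp_rw [funext avgAbs_eq_div]
  have hone : Integrable ((Ioo a b).indicator (1 : ℝ → ℝ)) :=
    (integrable_indicator_iff measurableSet_Ioo).2 (integrableOn_const (by simp))
  exact (continuous_integral_Ioo_sub_add ((integrable_indicator_iff measurableSet_Ioo).2 hg.abs)
    hε).measurable.div (continuous_integral_Ioo_sub_add hone hε).measurable

theorem integrableOn_fcut_mul_avgAbs {c₀ : ℝ} (hc : 0 ≤ c₀) (hε : 0 ≤ ε)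
    (hg : IntegrableOn g (Ioo a b)) {s : Set ℝ} (hs : volume s ≠ ⊤) :
    IntegrableOn (fun y => fcut c₀ (ε * avgAbs a b ε g y)) s := by
  refine Integrable.mono' (g := fun _ => c₀) (integrableOn_const hs)
    ((continuous_fcut c₀).measurable.comp ((measurable_avgAbs hε hg).const_mul ε)
      ).aestronglyMeasurable (Eventually.of_forall fun y => ?_)
  rw [Real.norm_eq_abs, abs_of_nonneg (fcut_nonneg hc (mul_nonneg hε (avgAbs_nonneg y)))]
  exact fcut_le hc _

theorem setIntegral_abs_le_two_mul_avgAbs (hε : 0 < ε) {y : ℝ} (hy : y ∈ Ioo a b) :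
    ∫ t in Ioo (y - ε) (y + ε) ∩ Ioo a b, |g t| ≤ 2 * ε * avgAbs a b ε g y := by
  set S := Ioo (y - ε) (y + ε) ∩ Ioo a b
  have hS_pos : 0 < volume.real S := by
    have hy' : max (y - ε) a < min (y + ε) b :=
      (max_lt (by linarith) hy.1).trans (lt_min (by linarith) hy.2)
    rw [show S = _ from Ioo_inter_Ioo, Real.volume_real_Ioo_of_le hy'.le]
    exact sub_pos.2 hy'
  have hS_le : volume.real S ≤ 2 * ε := by
    calc volume.real S ≤ volume.real (Ioo (y - ε) (y + ε)) :=
          measureReal_mono inter_subset_left (by simp [Real.volume_Ioo])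
      _ = 2 * ε := by rw [Real.volume_real_Ioo_of_le (by linarith)]; ring
  have hI : 0 ≤ ∫ t in S, |g t| :=
    setIntegral_nonneg (measurableSet_Ioo.inter measurableSet_Ioo) fun t _ => abs_nonneg _
  rw [avgAbs, setAverage_eq, smul_eq_mul, ← mul_assoc]
  calc ∫ t in S, |g t| = volume.real S * (volume.real S)⁻¹ * ∫ t in S, |g t| := by
        rw [mul_inv_cancel₀ hS_pos.ne', one_mul]
    _ ≤ 2 * ε * (volume.real S)⁻¹ * ∫ t in S, |g t| := by gcongr

end Average

theorem two_mul_fcut_le_integral_fcut_avgAbs {a b c₀ ε p q : ℝ} {g : ℝ → ℝ} (hc : 0 ≤ c₀)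
    (hε : 0 < ε) (hg : IntegrableOn g (Ioo a b)) (hpq : p ≤ q)
    (hsub : Ioo (p - ε) (q + ε) ⊆ Ioo a b) :
    2 * ε * fcut c₀ ((∫ t in Ioo p q, |g t|) / 2) ≤
      ∫ y in Ioo (p - ε) (q + ε), fcut c₀ (ε * avgAbs a b ε g y) := by
  set h := (Ioo p q).indicator fun t => |g t|
  have hpq_sub : Ioo p q ⊆ Ioo a b := (Ioo_subset_Ioo (by linarith) (by linarith)).trans hsub
  have hh : Integrable h :=
    (integrable_indicator_iff measurableSet_Ioo).2 (IntegrableOn.mono_set hg.abs hpq_sub)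
  have hwindow : ∀ y ∈ Ioo (p - ε) (q + ε),
      (∫ t in Ioo (y - ε) (y + ε), h t) / 2 ≤ ε * avgAbs a b ε g y := fun y hy => by
    have := setIntegral_abs_le_two_mul_avgAbs (g := g) hε (hsub hy)
    have hmono : ∫ t in Ioo (y - ε) (y + ε), h t ≤ ∫ t in Ioo (y - ε) (y + ε) ∩ Ioo a b, |g t| := by
      rw [setIntegral_indicator measurableSet_Ioo]
      exact setIntegral_mono_set (IntegrableOn.mono_set hg.abs inter_subset_right)
        (Eventually.of_forall fun t => abs_nonneg _)
        (Eventually.of_forall (inter_subset_inter_right _ hpq_sub))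
    linarith
  calc 2 * ε * fcut c₀ ((∫ t in Ioo p q, |g t|) / 2) = 2 * ε * fcut c₀ ((∫ t, h t) / 2) := by
        rw [integral_indicator measurableSet_Ioo]
    _ ≤ ∫ y in Ioo (p - ε) (q + ε), fcut c₀ ((∫ t in Ioo (y - ε) (y + ε), h t) / 2) :=
        two_mul_fcut_le_integral_fcut_window hc hh
          (fun t => indicator_nonneg (fun _ _ => abs_nonneg _) t)
          (fun t ht => indicator_of_notMem ht _) hpq hε
    _ ≤ ∫ y in Ioo (p - ε) (q + ε), fcut c₀ (ε * avgAbs a b ε g y) :=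
        setIntegral_mono_on
          (((continuous_fcut c₀).comp ((continuous_integral_Ioo_sub_add hh hε.le).div_const 2)
            ).integrableOn_Icc.mono_set Ioo_subset_Icc_self)
          (integrableOn_fcut_mul_avgAbs hc hε.le hg (by simp [Real.volume_Ioo])) measurableSet_Ioo
          fun y hy => fcut_mono hc (hwindow y hy)

theorem sq_setIntegral_abs_le {α : Type*} [MeasurableSpace α] {μ : Measure α} {s : Set α}
    (hs : μ s ≠ ⊤) {F : α → ℝ} (hF : MemLp F 2 (μ.restrict s)) :
    (∫ x in s, |F x| ∂μ) ^ 2 ≤ μ.real s * ∫ x in s, F x ^ 2 ∂μ := by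
  rcases eq_or_ne (μ s) 0 with h0 | h0
  · simp [Measure.restrict_eq_zero.2 h0]
  have : IsFiniteMeasure (μ.restrict s) := isFiniteMeasure_restrict.2 hs
  have hv : 0 < μ.real s := ENNReal.toReal_pos h0 hs
  have hjensen := (convexOn_pow 2).map_set_average_le (continuous_pow 2).continuousOn isClosed_Ici
    h0 hs (Eventually.of_forall fun x => abs_nonneg (F x)) (hF.integrable one_le_two).abs
    (by simpa [Function.comp_def, sq_abs, IntegrableOn] using hF.integrable_sq)
  simp only [setAverage_eq, smul_eq_mul, sq_abs] at hjensen
  rw [mul_pow, inv_pow, sq (μ.real s), ← div_eq_inv_mul, ← div_eq_inv_mul,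
    div_le_div_iff₀ (by positivity) hv] at hjensen
  nlinarith

theorem exists_mem_Ioo_abs_le_of_setIntegral_lt {F : ℝ → ℝ} {s : Set ℝ} {c d δ : ℝ} (hcd : c < d)
    (hsub : Ioo c d ⊆ s) (hF : IntegrableOn F s) (h : ∫ t in s, |F t| < (d - c) * δ) :
    ∃ t ∈ Ioo c d, |F t| ≤ δ := by
  have hvol : volume (Ioo c d) ≠ 0 := ((Measure.measure_Ioo_pos volume).2 hcd).ne'
  obtain ⟨t, ht, hle⟩ :=
    exists_le_setAverage hvol (by simp [Real.volume_Ioo]) (hF.mono_set hsub).abs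
  refine ⟨t, ht, hle.trans ?_⟩
  rw [setAverage_eq, smul_eq_mul, Real.volume_real_Ioo_of_le hcd.le, inv_mul_le_iff₀ (by linarith)]
  exact (setIntegral_mono_set hF.abs (Eventually.of_forall fun _ => abs_nonneg _)
    (Eventually.of_forall hsub)).trans h.le

theorem abs_sub_le_setIntegral_abs_sub_add {a b p q : ℝ} {v v' g : ℝ → ℝ} (hv : IsW11 a b v v')
    (hg : IntegrableOn g (Ioo a b)) (hp : p ∈ Ioo a b) (hq : q ∈ Ioo a b) (hpq : p ≤ q) :
    |v q - v p| ≤ (∫ t in Ioo p q, |v' t - g t|) + ∫ t in Ioo p q, |g t| := by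
  have hsub : Ioo p q ⊆ Ioo a b := Ioo_subset_Ioo hp.1.le hq.2.le
  have hv' : IntegrableOn v' (Ioo p q) := hv.2.1.mono_set hsub
  have hg' : IntegrableOn g (Ioo p q) := hg.mono_set hsub
  rw [hv.2.2 p hp q hq hpq, intervalIntegral.integral_of_le hpq, integral_Ioc_eq_integral_Ioo,
    ← integral_add (f := fun t => |v' t - g t|) (hv'.sub hg').abs hg'.abs]
  refine abs_integral_le_integral_abs.trans
    (integral_mono hv'.abs ((hv'.sub hg').abs.add hg'.abs) fun t => ?_)
  linarith [abs_sub_abs_le_abs_sub (v' t) (g t)]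

/-- The `5δ` are `4δ` from passing from `l, l'` to `v p, v q` and `δ` from Cauchy–Schwarz
for the elastic part `v' - g`. -/
theorem abs_sub_sub_le_setIntegral_abs {a b p q δ l l' : ℝ} {u v v' g : ℝ → ℝ}
    (hv : IsW11 a b v v') (hg : IntegrableOn g (Ioo a b))
    (hL2 : MemLp (fun t => v' t - g t) 2 (volume.restrict (Ioo a b)))
    (hp : p ∈ Ioo a b) (hq : q ∈ Ioo a b) (hpq : p ≤ q) (hδ : 0 ≤ δ)
    (hup : |u p - l| ≤ δ) (huq : |u q - l'| ≤ δ) (hvp : |v p - u p| ≤ δ) (hvq : |v q - u q| ≤ δ)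
    (hE : volume.real (Ioo p q) * ∫ t in Ioo p q, (v' t - g t) ^ 2 ≤ δ ^ 2) :
    |l' - l| - 5 * δ ≤ ∫ t in Ioo p q, |g t| := by
  have hCS : ∫ t in Ioo p q, |v' t - g t| ≤ δ :=
    (pow_le_pow_iff_left₀ (setIntegral_nonneg measurableSet_Ioo fun _ _ => abs_nonneg _) hδ
      two_ne_zero).1 <| (sq_setIntegral_abs_le (by simp [Real.volume_Ioo])
        (hL2.mono_measure (Measure.restrict_mono (Ioo_subset_Ioo hp.1.le hq.2.le) le_rfl))).trans hE
  have hFTC := abs_sub_le_setIntegral_abs_sub_add hv hg hp hq hpq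
  rw [abs_le] at hup huq hvp hvq
  have : |l' - l| ≤ |v q - v p| + 4 * δ := by
    rw [abs_le]
    constructor <;> linarith [le_abs_self (v q - v p), neg_abs_le (v q - v p)]
  linarith

theorem two_mul_fcut_jump_le_integral {a b c₀ x r δ ε l l' : ℝ} {u v v' g : ℝ → ℝ}
    (hc : 0 ≤ c₀) (hI : Ioo (x - r) (x + r) ⊆ Ioo a b)
    (hl : ∀ t ∈ Ioo (x - r) x, |u t - l| ≤ δ) (hl' : ∀ t ∈ Ioo x (x + r), |u t - l'| ≤ δ)
    (hu : IntegrableOn u (Ioo a b)) (hv : IsW11 a b v v') (hg : IntegrableOn g (Ioo a b))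
    (hL2 : MemLp (fun t => v' t - g t) 2 (volume.restrict (Ioo a b)))
    (hE : 2 * r * ∫ t in Ioo (x - r) (x + r), (v' t - g t) ^ 2 ≤ δ ^ 2)
    (hclose : ∫ t in Ioo (x - r) (x + r), |v t - u t| < r / 4 * δ)
    (hε : 0 < ε) (hεr : ε < r / 4) :
    2 * ε * fcut c₀ ((|l' - l| - 5 * δ) / 2) ≤
      ∫ y in Ioo (x - r) (x + r), fcut c₀ (ε * avgAbs a b ε g y) := by
  have hδ : 0 < δ := by
    have := setIntegral_nonneg (μ := volume) measurableSet_Ioo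
      fun t (_ : t ∈ Ioo (x - r) (x + r)) => abs_nonneg (v t - u t)
    nlinarith
  have hvu : IntegrableOn (fun t => v t - u t) (Ioo (x - r) (x + r)) := (hv.1.sub hu).mono_set hI
  -- by the `L¹` bound, `v` is `δ`-close to `u` somewhere in each quarter of the window
  obtain ⟨p, hp, hvp⟩ := exists_mem_Ioo_abs_le_of_setIntegral_lt (by linarith)
    (Ioo_subset_Ioo (by linarith) (by linarith)) hvu
    (by linarith : _ < (x - r / 2 - (x - 3 * r / 4)) * δ)
  obtain ⟨q, hq, hvq⟩ := exists_mem_Ioo_abs_le_of_setIntegral_lt (by linarith)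
    (Ioo_subset_Ioo (by linarith) (by linarith)) hvu
    (by linarith : _ < (x + 3 * r / 4 - (x + r / 2)) * δ)
  have hpq : p ≤ q := by linarith [hp.2, hq.1]
  have hpqI : Ioo p q ⊆ Ioo (x - r) (x + r) :=
    Ioo_subset_Ioo (by linarith [hp.1]) (by linarith [hq.2])
  have hwindow : Ioo (p - ε) (q + ε) ⊆ Ioo (x - r) (x + r) :=
    Ioo_subset_Ioo (by linarith [hp.1]) (by linarith [hq.2])
  have hE' : volume.real (Ioo p q) * ∫ t in Ioo p q, (v' t - g t) ^ 2 ≤ δ ^ 2 := by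
    have hF2 : IntegrableOn (fun t => (v' t - g t) ^ 2) (Ioo a b) := hL2.integrable_sq
    refine le_trans (mul_le_mul ?_ ?_ (setIntegral_nonneg measurableSet_Ioo fun _ _ => sq_nonneg _)
      (by linarith)) hE
    · rw [Real.volume_real_Ioo_of_le hpq]; linarith [hp.1, hq.2]
    · exact setIntegral_mono_set (hF2.mono_set hI)
        (Eventually.of_forall fun _ => sq_nonneg _) (Eventually.of_forall hpqI)
  have hmass := abs_sub_sub_le_setIntegral_abs hv hg hL2
    (hI ⟨by linarith [hp.1], by linarith [hp.2]⟩) (hI ⟨by linarith [hq.1], by linarith [hq.2]⟩)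
    hpq hδ.le (hl p ⟨by linarith [hp.1], by linarith [hp.2]⟩)
    (hl' q ⟨by linarith [hq.1], by linarith [hq.2]⟩) hvp hvq hE'
  calc 2 * ε * fcut c₀ ((|l' - l| - 5 * δ) / 2)
      ≤ 2 * ε * fcut c₀ ((∫ t in Ioo p q, |g t|) / 2) := by
        gcongr
        exact fcut_mono hc (by linarith)
    _ ≤ ∫ y in Ioo (p - ε) (q + ε), fcut c₀ (ε * avgAbs a b ε g y) :=
        two_mul_fcut_le_integral_fcut_avgAbs hc hε hg hpq (hwindow.trans hI)
    _ ≤ ∫ y in Ioo (x - r) (x + r), fcut c₀ (ε * avgAbs a b ε g y) :=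
        setIntegral_mono_set (integrableOn_fcut_mul_avgAbs hc hε.le hg (by simp [Real.volume_Ioo]))
          (Eventually.of_forall fun y => fcut_nonneg hc (mul_nonneg hε.le (avgAbs_nonneg y)))
          (Eventually.of_forall hwindow)

section Radius

variable {x : ℝ} {P : ℝ → Prop}

theorem eventually_forall_Ioo_sub_of_nhdsLT (h : ∀ᶠ t in 𝓝[<] x, P t) :
    ∀ᶠ r in 𝓝[>] 0, ∀ t ∈ Ioo (x - r) x, P t := by
  obtain ⟨l, hl, hsub⟩ := mem_nhdsLT_iff_exists_Ioo_subset.1 h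
  filter_upwards [Ioo_mem_nhdsGT (sub_pos.2 hl)] with r hr t ht
  exact hsub ⟨by linarith [hr.2, ht.1], ht.2⟩

theorem eventually_forall_Ioo_add_of_nhdsGT (h : ∀ᶠ t in 𝓝[>] x, P t) :
    ∀ᶠ r in 𝓝[>] 0, ∀ t ∈ Ioo x (x + r), P t := by
  obtain ⟨l, hl, hsub⟩ := mem_nhdsGT_iff_exists_Ioo_subset.1 h
  filter_upwards [Ioo_mem_nhdsGT (sub_pos.2 hl)] with r hr t ht
  exact hsub ⟨ht.1, by linarith [hr.2, ht.2]⟩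

theorem eventually_Ioo_subset_of_mem_nhds {A : Set ℝ} (hA : A ∈ 𝓝 x) :
    ∀ᶠ r in 𝓝[>] 0, Ioo (x - r) (x + r) ⊆ A := by
  obtain ⟨ρ, hρ, hsub⟩ := Metric.mem_nhds_iff.1 hA
  filter_upwards [Ioo_mem_nhdsGT hρ] with r hr
  rw [← Real.ball_eq_Ioo]
  exact (Metric.ball_subset_ball hr.2.le).trans hsub

theorem eventually_pairwiseDisjoint_Ioo (T : Finset ℝ) :
    ∀ᶠ r in 𝓝[>] 0, (T : Set ℝ).PairwiseDisjoint fun x => Ioo (x - r) (x + r) := by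
  have hsep : ∀ᶠ r in 𝓝[>] (0 : ℝ), ∀ x ∈ T, ∀ y ∈ T, x ≠ y → r + r ≤ dist x y := by
    refine (eventually_all_finset T).2 fun x _ => (eventually_all_finset T).2 fun y _ => ?_
    rcases eq_or_ne x y with rfl | hxy
    · exact Eventually.of_forall fun _ h => (h rfl).elim
    filter_upwards [Ioo_mem_nhdsGT (half_pos (dist_pos.2 hxy))] with r hr _
    linarith [hr.2]
  filter_upwards [hsep] with r hr x hx y hy hxy
  simp only [Function.onFun, ← Real.ball_eq_Ioo]
  exact Metric.ball_disjoint_ball (hr x hx y hy hxy)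

end Radius

theorem sum_setIntegral_le_setIntegral {α ι : Type*} [MeasurableSpace α] {μ : Measure α}
    {f : α → ℝ} {A : Set α} (T : Finset ι) {s : ι → Set α} (hs : ∀ i ∈ T, MeasurableSet (s i))
    (hd : (T : Set ι).PairwiseDisjoint s) (hsA : ∀ i ∈ T, s i ⊆ A) (hf : IntegrableOn f A μ)
    (hnn : ∀ x, 0 ≤ f x) :
    ∑ i ∈ T, ∫ x in s i, f x ∂μ ≤ ∫ x in A, f x ∂μ := by
  rw [← integral_biUnion_finset T hs hd fun i hi => hf.mono_set (hsA i hi)]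
  exact setIntegral_mono_set hf (Eventually.of_forall hnn)
    (Eventually.of_forall (iUnion₂_subset hsA))

theorem eventually_forall_abs_sub_llim_rlim_le {a b δ : ℝ} {u : ℝ → ℝ} {x : ℝ}
    (hx : x ∈ jumpSet a b u) (hδ : 0 < δ) :
    ∀ᶠ r in 𝓝[>] 0, (∀ t ∈ Ioo (x - r) x, |u t - llim u x| ≤ δ) ∧
      ∀ t ∈ Ioo x (x + r), |u t - rlim u x| ≤ δ := by
  obtain ⟨-, ⟨l, hl⟩, ⟨l', hl'⟩, -⟩ := hx
  rw [llim, rlim, hl.limUnder_eq, hl'.limUnder_eq]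
  exact (eventually_forall_Ioo_sub_of_nhdsLT ((Metric.tendsto_nhds.1 hl δ hδ).mono
      fun t ht => (Real.dist_eq _ _ ▸ ht).le)).and
    (eventually_forall_Ioo_add_of_nhdsGT ((Metric.tendsto_nhds.1 hl' δ hδ).mono
      fun t ht => (Real.dist_eq _ _ ▸ ht).le))

theorem setIntegral_sq_le_and_setIntegral_fcut_le_of_epsCoreOn_lt {a b c₀ ε Λ : ℝ}
    {A : Set ℝ} {v' g : ℝ → ℝ} (hc : 0 ≤ c₀) (hε : 0 < ε) (hA : MeasurableSet A)
    (h : EpsCoreOn a b c₀ ε A v' g < Λ) :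
    ∫ x in A, (v' x - g x) ^ 2 ≤ Λ ∧ ∫ x in A, fcut c₀ (ε * avgAbs a b ε g x) ≤ ε * Λ := by
  have hsq : 0 ≤ ∫ x in A, (v' x - g x) ^ 2 := setIntegral_nonneg hA fun _ _ => sq_nonneg _
  have hF : 0 ≤ ∫ x in A, fcut c₀ (ε * avgAbs a b ε g x) :=
    setIntegral_nonneg hA fun x _ => fcut_nonneg hc (mul_nonneg hε.le (avgAbs_nonneg x))
  rw [EpsCoreOn, one_div, ← div_eq_inv_mul] at h
  have := div_nonneg hF hε.le
  refine ⟨by linarith, ?_⟩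
  rw [← div_le_iff₀' hε]
  linarith

theorem exists_of_eepsLoc_lt {a b c₀ K ε : ℝ} {A : Set ℝ} {v : ℝ → ℝ} {γ : SignedMeasure ℝ}
    {c : ℝ≥0∞} (h : EepsLoc a b c₀ K ε A v γ < c) :
    ∃ v' g : ℝ → ℝ, IsW11 a b v v' ∧ IntegrableOn g (Ioo a b) ∧
      MemLp (fun t => v' t - g t) 2 (volume.restrict (Ioo a b)) ∧
      ENNReal.ofReal (EpsCoreOn a b c₀ ε A v' g) < c := by
  simp only [EepsLoc, iInf_lt_iff] at h
  obtain ⟨v', g, hv, -, hg, -, hL2, h⟩ := h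
  exact ⟨v', g, hv, hg, hL2, h⟩

section GammaLiminf

variable {a b c₀ K : ℝ} {A : Set ℝ} {u : ℝ → ℝ} {uε : ℝ → ℝ → ℝ} {γε : ℝ → SignedMeasure ℝ}

theorem two_mul_sum_fcut_jump_sub_le (hc : 0 ≤ c₀) (hAopen : IsOpen A) (hAsub : A ⊆ Ioo a b)
    (hu : IntegrableOn u (Ioo a b)) (hL1 : TendstoL1 a b uε u) {T : Finset ℝ}
    (hT : ∀ x ∈ T, x ∈ jumpSet a b u ∩ A) {δ Λ : ℝ} (hδ : 0 < δ)
    (hfreq : ∃ᶠ ε in 𝓝[>] 0, EepsLoc a b c₀ K ε A (uε ε) (γε ε) < ENNReal.ofReal Λ) :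
    2 * ∑ x ∈ T, fcut c₀ ((|jump u x| - 5 * δ) / 2) ≤ Λ := by
  have hsmall : ∀ᶠ r in 𝓝[>] (0 : ℝ), 2 * r * Λ ≤ δ ^ 2 := by
    have : Tendsto (fun r : ℝ => 2 * r * Λ) (𝓝 0) (𝓝 0) := by
      simpa using ((continuous_const_mul 2).mul_const Λ).tendsto 0
    exact nhdsWithin_le_nhds (this.eventually (eventually_le_nhds (by positivity)))
  obtain ⟨r, ⟨⟨hrT, hdisj⟩, hrΛ⟩, (hr : 0 < r)⟩ := (((eventually_all_finset T).2 fun x hx =>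
      (eventually_Ioo_subset_of_mem_nhds (hAopen.mem_nhds (hT x hx).2)).and
        (eventually_forall_abs_sub_llim_rlim_le (hT x hx).1 hδ)).and
    (eventually_pairwiseDisjoint_Ioo T) |>.and hsmall |>.and eventually_mem_nhdsWithin).exists
  obtain ⟨ε, hEε, ⟨(hε : 0 < ε), hεr⟩, hclose⟩ := (hfreq.and_eventually
    ((eventually_mem_nhdsWithin.and
      (nhdsWithin_le_nhds (eventually_lt_nhds (by positivity : (0 : ℝ) < r / 4)))).and
      (hL1.eventually_lt_const (by positivity : (0 : ℝ) < r / 4 * δ)))).exists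
  obtain ⟨v', g, hv, hg, hL2, hcore⟩ := exists_of_eepsLoc_lt hEε
  obtain ⟨hsqΛ, hFΛ⟩ := setIntegral_sq_le_and_setIntegral_fcut_le_of_epsCoreOn_lt hc hε
    hAopen.measurableSet (ENNReal.ofReal_lt_ofReal_iff'.1 hcore).1
  have hpoint : ∀ x ∈ T, 2 * ε * fcut c₀ ((|jump u x| - 5 * δ) / 2) ≤
      ∫ y in Ioo (x - r) (x + r), fcut c₀ (ε * avgAbs a b ε g y) := fun x hx => by
    obtain ⟨hxA, hl, hl'⟩ := hrT x hx
    have hF2 : IntegrableOn (fun t => (v' t - g t) ^ 2) (Ioo a b) := hL2.integrable_sq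
    refine two_mul_fcut_jump_le_integral hc (hxA.trans hAsub) hl hl' hu hv hg hL2 ?_ ?_ hε hεr
    · refine le_trans (mul_le_mul_of_nonneg_left ?_ (by positivity)) hrΛ
      exact (setIntegral_mono_set (hF2.mono_set hAsub) (Eventually.of_forall fun _ => sq_nonneg _)
        (Eventually.of_forall hxA)).trans hsqΛ
    · refine lt_of_le_of_lt ?_ hclose
      exact setIntegral_mono_set (hv.1.sub hu).abs (Eventually.of_forall fun _ => abs_nonneg _)
        (Eventually.of_forall (hxA.trans hAsub))
  refine le_of_mul_le_mul_left ?_ hε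
  calc ε * (2 * ∑ x ∈ T, fcut c₀ ((|jump u x| - 5 * δ) / 2))
      = ∑ x ∈ T, 2 * ε * fcut c₀ ((|jump u x| - 5 * δ) / 2) := by
        rw [Finset.mul_sum, Finset.mul_sum]
        exact Finset.sum_congr rfl fun _ _ => by ring
    _ ≤ ∑ x ∈ T, ∫ y in Ioo (x - r) (x + r), fcut c₀ (ε * avgAbs a b ε g y) :=
        Finset.sum_le_sum hpoint
    _ ≤ ∫ y in A, fcut c₀ (ε * avgAbs a b ε g y) :=
        sum_setIntegral_le_setIntegral T (fun _ _ => measurableSet_Ioo) hdisj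
          (fun x hx => (hrT x hx).1)
          (integrableOn_fcut_mul_avgAbs hc hε.le hg
            ((measure_mono hAsub).trans_lt (by simp [Real.volume_Ioo])).ne)
          fun y => fcut_nonneg hc (mul_nonneg hε.le (avgAbs_nonneg y))
    _ ≤ ε * Λ := hFΛ

theorem two_mul_sum_fcut_jump_le_toReal_liminf (hc : 0 ≤ c₀) (hAopen : IsOpen A)
    (hAsub : A ⊆ Ioo a b) (hu : IntegrableOn u (Ioo a b)) (hL1 : TendstoL1 a b uε u)
    {T : Finset ℝ} (hT : ∀ x ∈ T, x ∈ jumpSet a b u ∩ A)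
    (hL : liminf (fun ε => EepsLoc a b c₀ K ε A (uε ε) (γε ε)) (𝓝[>] 0) ≠ ⊤) :
    2 * ∑ x ∈ T, fcut c₀ (|jump u x| / 2) ≤
      (liminf (fun ε => EepsLoc a b c₀ K ε A (uε ε) (γε ε)) (𝓝[>] 0)).toReal := by
  set L := liminf (fun ε => EepsLoc a b c₀ K ε A (uε ε) (γε ε)) (𝓝[>] 0)
  refine le_of_forall_pos_le_add fun η hη => ?_
  have hC : 0 < 1 + 5 * c₀ * T.card := by positivity
  set δ := η / (1 + 5 * c₀ * T.card)
  have hδ : 0 < δ := by positivity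
  have hfreq : ∃ᶠ ε in 𝓝[>] 0, EepsLoc a b c₀ K ε A (uε ε) (γε ε) < ENNReal.ofReal (L.toReal + δ) :=
    frequently_lt_of_liminf_lt (h := by
      rw [ENNReal.ofReal_add ENNReal.toReal_nonneg hδ.le, ENNReal.ofReal_toReal hL]
      exact ENNReal.lt_add_right hL (ENNReal.ofReal_pos.2 hδ).ne')
  have hjump := two_mul_sum_fcut_jump_sub_le hc hAopen hAsub hu hL1 hT hδ hfreq
  have hlip : ∀ x ∈ T,
      fcut c₀ (|jump u x| / 2) ≤ fcut c₀ ((|jump u x| - 5 * δ) / 2) + c₀ * (5 * δ / 2) :=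
    fun x _ => by
      convert fcut_le_fcut_sub_add hc (by positivity : 0 ≤ 5 * δ / 2) (|jump u x| / 2) using 3
      ring
  calc 2 * ∑ x ∈ T, fcut c₀ (|jump u x| / 2)
      ≤ 2 * ∑ x ∈ T, (fcut c₀ ((|jump u x| - 5 * δ) / 2) + c₀ * (5 * δ / 2)) := by
        gcongr with x hx; exact hlip x hx
    _ = 2 * ∑ x ∈ T, fcut c₀ ((|jump u x| - 5 * δ) / 2) + T.card * (5 * c₀ * δ) := by
        rw [Finset.sum_add_distrib, Finset.sum_const, nsmul_eq_mul]; ring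
    _ ≤ L.toReal + δ + T.card * (5 * c₀ * δ) := by linarith
    _ = L.toReal + η := by
        have : δ * (1 + 5 * c₀ * T.card) = η := div_mul_cancel₀ η hC.ne'
        linarith

theorem two_mul_tsum_fcut_jump_le_liminf (hc : 0 ≤ c₀) (hAopen : IsOpen A)
    (hAsub : A ⊆ Ioo a b) (hu : IntegrableOn u (Ioo a b)) (hL1 : TendstoL1 a b uε u) :
    2 * ∑' p : ↥(jumpSet a b u ∩ A), ENNReal.ofReal (fcut c₀ (|jump u ↑p| / 2)) ≤
      liminf (fun ε => EepsLoc a b c₀ K ε A (uε ε) (γε ε)) (𝓝[>] 0) := by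
  rcases eq_or_ne (liminf (fun ε => EepsLoc a b c₀ K ε A (uε ε) (γε ε)) (𝓝[>] 0)) ⊤ with hL | hL
  · exact hL ▸ le_top
  rw [ENNReal.tsum_eq_iSup_sum, ENNReal.mul_iSup]
  refine iSup_le fun S => ?_
  have hS := two_mul_sum_fcut_jump_le_toReal_liminf hc hAopen hAsub hu hL1
    (T := S.map (Function.Embedding.subtype _)) (by simp +contextual) hL
  rw [Finset.sum_map] at hS
  calc 2 * ∑ p ∈ S, ENNReal.ofReal (fcut c₀ (|jump u ↑p| / 2))
      = ENNReal.ofReal (2 * ∑ p ∈ S, fcut c₀ (|jump u ↑p| / 2)) := by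
        rw [ENNReal.ofReal_mul zero_le_two, ENNReal.ofReal_ofNat,
          ENNReal.ofReal_sum_of_nonneg fun _ _ => fcut_nonneg hc (by positivity)]
    _ ≤ _ := ENNReal.ofReal_le_of_le_toReal hS

end GammaLiminf

theorem eigendamage_liminf_jump_part_general
    (a b c₀ K : ℝ) (hc₀ : 0 < c₀)
    (A : Set ℝ) (hAopen : IsOpen A) (hAsub : A ⊆ Set.Ioo a b)
    (u : ℝ → ℝ) (γ : SignedMeasure ℝ)
    (hu : IntegrableOn u (Set.Ioo a b)) :
    2 * ∑' p : ↥(jumpSet a b u ∩ A), ENNReal.ofReal (fcut c₀ (|jump u ↑p| / 2)) ≤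
      GammaLowerLoc a b c₀ K A u γ :=
  le_iInf₂ fun _ _ => le_iInf₂ fun hL1 _ =>
    two_mul_tsum_fcut_jump_le_liminf hc₀.le hAopen hAsub hu hL1

/-- **Proposition (lower bound for the jump part).**
For every open `A ⊆ (a,b)` and every `(u,γ)` with `u ∈ BV(a,b)`, `γ = D^s u + g·L¹`,
`g ∈ L¹(a,b)` and `u′ − g ∈ L²(a,b)`, the localized Γ-lower limit satisfies
`E′(u,γ,A) ≥ 2 Σ_{x ∈ J_u ∩ A} f(|[u](x)|/2)`. -/
theorem eigendamage_liminf_jump_part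
    (a b c₀ K : ℝ) (ha : 0 < a) (hab : a < b) (hc₀ : 0 < c₀) (hK : 0 < K)
    (A : Set ℝ) (hAopen : IsOpen A) (hAsub : A ⊆ Set.Ioo a b)
    (u : ℝ → ℝ) (γ Du : SignedMeasure ℝ) (g : ℝ → ℝ)
    (hu : IntegrableOn u (Set.Ioo a b))
    (hDu : HasDerivMeasureOn (Set.Ioo a b) u Du)
    (hg : IntegrableOn g (Set.Ioo a b))
    (hγ : γ = Du.singularPart volume + (volume.restrict (Set.Ioo a b)).withDensityᵥ g)
    (hL2 : MemLp (fun x => Du.rnDeriv volume x - g x) 2 (volume.restrict (Set.Ioo a b))) :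
    2 * ∑' p : ↥(jumpSet a b u ∩ A), ENNReal.ofReal (fcut c₀ (|jump u ↑p| / 2)) ≤
      GammaLowerLoc a b c₀ K A u γ :=
  eigendamage_liminf_jump_part_general a b c₀ K hc₀ A hAopen hAsub u γ hu

end
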